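/- arXiv:2411.19455 — 5 statements merged into one kernel-verified Lean document; each statement's English description precedes it below -/
import Mathlib

section
/- For every real number t ≠ 0, the series ∑_{n=1}^∞ 1/(n² + t²) converges and equals −1/(2t²) + (π/(2t))·coth(πt), where coth(x) = (e^{2x} + 1)/(e^{2x} − 1). -/
/-
Evaluate Euler's partial fraction expansion of the cotangent,
`π cot (π x) - 1 / x = ∑_{n ≥ 1} (1 / (x - n) + 1 / (x + n))`, at the imaginary point `x = i t`:
there `1 / (x - n) + 1 / (x + n) = -2 i t / (n² + t²)` and `cot (π i t) = -i coth (π t)`.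
-/

open Real

theorem Real.cosh_div_sinh_eq (x : ℝ) :
    cosh x / sinh x = (exp (2 * x) + 1) / (exp (2 * x) - 1) := by
  rw [cosh_eq, sinh_eq, ← mul_div_mul_left _ _ (mul_ne_zero (exp_pos x).ne' two_ne_zero)]
  congr 1 <;> rw [two_mul, exp_add, exp_neg] <;> field_simp

namespace Complex

lemma mem_integerComplement_of_im_ne_zero {x : ℂ} (hx : x.im ≠ 0) : x ∈ integerComplement :=
  fun ⟨n, hn⟩ => hx (by simp [← hn])

lemma cot_mul_I (x : ℂ) : cot (x * I) = cosh x / (sinh x * I) := by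
  rw [cot, cos_mul_I, sin_mul_I]

lemma hasSum_cotTerm {x : ℂ} (hx : x ∈ integerComplement) :
    HasSum (cotTerm x) (π * cot (π * x) - 1 / x) := by
  rw [cot_series_rep' hx]
  exact (summable_cotTerm hx).hasSum

lemma hasSum_one_div_sq_sub_sq {x : ℂ} (hx : x ∈ integerComplement) :
    HasSum (fun n : ℕ => 1 / (x ^ 2 - (n + 1) ^ 2)) ((π * cot (π * x) - 1 / x) / (2 * x)) := by
  have h2x : 2 * x ≠ 0 := mul_ne_zero two_ne_zero (integerComplement.ne_zero hx)
  refine ((hasSum_cotTerm hx).div_const (2 * x)).congr_fun fun n => ?_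
  rw [cotTerm_identity hx, mul_div_cancel_left₀ _ h2x]
  ring

lemma hasSum_one_div_sq_add_sq {x : ℂ} (hx : x * I ∈ integerComplement) :
    HasSum (fun n : ℕ => 1 / ((n + 1) ^ 2 + x ^ 2))
      (-1 / (2 * x ^ 2) + π / (2 * x) * (cosh (π * x) / sinh (π * x))) := by
  have hx0 : x ≠ 0 := left_ne_zero_of_mul (integerComplement.ne_zero hx)
  have hsinh : sinh (π * x) ≠ 0 := by
    have := sin_pi_mul_ne_zero hx
    rwa [← mul_assoc, sin_mul_I, mul_ne_zero_iff_right I_ne_zero] at this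
  have hterm (n : ℕ) : -(1 / ((x * I) ^ 2 - (n + 1) ^ 2)) = 1 / ((n + 1) ^ 2 + x ^ 2) := by
    rw [mul_pow, I_sq, ← div_neg]
    ring_nf
  have hvalue : -((π * cot (π * (x * I)) - 1 / (x * I)) / (2 * (x * I))) =
      -1 / (2 * x ^ 2) + π / (2 * x) * (cosh (π * x) / sinh (π * x)) := by
    rw [← mul_assoc, cot_mul_I]
    field_simp
    linear_combination (sinh (π * x) - π * x * cosh (π * x)) * I_sq
  simpa only [hterm, hvalue] using (hasSum_one_div_sq_sub_sq hx).neg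

end Complex

/-- For `t ≠ 0`, `∑_{n=1}^∞ 1/(n² + t²) = -1/(2t²) + (π/(2t)) coth(πt)`,
where `coth x = (e^{2x} + 1)/(e^{2x} - 1)`. `HasSum` expresses both convergence and the value. -/
theorem stmt_1 (t : ℝ) (ht : t ≠ 0) :
    HasSum (fun n : ℕ => 1 / ((((n : ℝ) + 1)) ^ 2 + t ^ 2))
      (-1 / (2 * t ^ 2) +
        (π / (2 * t)) * ((Real.exp (2 * (π * t)) + 1) / (Real.exp (2 * (π * t)) - 1))) := by
  have htI : (t : ℂ) * Complex.I ∈ Complex.integerComplement :=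
    Complex.mem_integerComplement_of_im_ne_zero (by simpa)
  rw [← Real.cosh_div_sinh_eq, ← Complex.hasSum_ofReal]
  push_cast
  exact Complex.hasSum_one_div_sq_add_sq htI
end

section
/- Let Δ > 0, let m, L be positive integers, and let w ∈ ℂ^m satisfy w_j ≠ 0 and Re(w_j) ≤ 0 for all j. Let x be a square-integrable random vector in ℝ^L, and let c ∈ ℂ^m be a random vector independent of x whose m real parts and m imaginary parts are 2m mutually independent centered Gaussian random variables of variance 1/2 (so E|c_j|² = 1 for each j). Define the ZOH-discretized SSM output y_L = ∑_{k=0}^{L−1} Re( ∑_{j=1}^m ((e^{Δ w_j} − 1)/w_j) · c_j · e^{Δ w_j (L−1−k)} ) · x_k. Then E[y_L²] ≤ Δ² · m² · L · λ_max(E[x xᵀ]), where λ_max denotes the largest eigenvalue. -/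
/-!
Write `y_L = g(c) ⬝ᵥ x`, where `g(c)_k` is the real part of a linear form in `c`. Since `c` and
`x` are independent, `E[y_L²] = E[g(c)ᵀ M g(c)]` with `M = E[x xᵀ]`, and the Rayleigh bound gives
`g(c)ᵀ M g(c) ≤ λ_max(M) ‖g(c)‖²` (with `λ_max(M) ≥ 0`, as `M` is positive semidefinite).
For `Re w ≤ 0` every ZOH coefficient `(e^{Δw} - 1)/w · e^{Δwn}` has modulus at most `Δ`, because
`|e^z - 1| ≤ |z|` on the closed left half-plane, so `g(c)_k² ≤ Δ² m ∑_j |c_j|²` by Cauchy–Schwarz;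
finally `E|c_j|² = 1/2 + 1/2`.
-/

open MeasureTheory ProbabilityTheory Matrix

/-- The ZOH-discretized diagonal SSM output
`y_L = ∑_{k=0}^{L-1} Re(∑_{j=1}^m ((e^{Δ w_j} - 1)/w_j) c_j e^{Δ w_j (L-1-k)}) x_k`. -/
noncomputable def ssmOutput {m L : ℕ} (Δ : ℝ) (w : Fin m → ℂ) (c : Fin m → ℂ)
    (x : Fin L → ℝ) : ℝ :=
  ∑ k : Fin L,
    (∑ j : Fin m, ((Complex.exp ((Δ : ℂ) * w j) - 1) / w j) * c j *
      Complex.exp ((Δ : ℂ) * w j * ((L - 1 - (k : ℕ) : ℕ) : ℂ))).re * x k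

theorem Complex.norm_exp_sub_one_le_of_re_nonpos {z : ℂ} (hz : z.re ≤ 0) :
    ‖exp z - 1‖ ≤ ‖z‖ := by
  simpa using (convex_halfSpace_re_le (0 : ℝ)).norm_image_sub_le_of_norm_deriv_le
    (f := exp) (C := 1) (fun _ _ => differentiableAt_exp)
    (fun u hu => by simpa [Complex.norm_exp] using hu) (x := 0) (by simp) hz

theorem norm_exp_sub_one_div_mul_exp_le {Δ : ℝ} (hΔ : 0 ≤ Δ) {w : ℂ} (hw : w.re ≤ 0) (n : ℕ) :
    ‖(Complex.exp (Δ * w) - 1) / w * Complex.exp (Δ * w * n)‖ ≤ Δ := by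
  have hre : (Δ * w : ℂ).re ≤ 0 := by simpa using mul_nonpos_of_nonneg_of_nonpos hΔ hw
  have hdiv : ‖(Complex.exp (Δ * w) - 1) / w‖ ≤ Δ := by
    rw [norm_div]
    refine div_le_of_le_mul₀ (norm_nonneg _) hΔ ?_
    simpa [abs_of_nonneg hΔ] using Complex.norm_exp_sub_one_le_of_re_nonpos hre
  have hexp : ‖Complex.exp (Δ * w * n)‖ ≤ 1 := by
    rw [Complex.norm_exp, Real.exp_le_one_iff]
    simpa using mul_nonpos_of_nonpos_of_nonneg hre n.cast_nonneg
  simpa [norm_mul] using mul_le_mul hdiv hexp (norm_nonneg _) hΔ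

noncomputable def ssmKernel {m L : ℕ} (Δ : ℝ) (w c : Fin m → ℂ) (k : Fin L) : ℝ :=
  (∑ j : Fin m, ((Complex.exp ((Δ : ℂ) * w j) - 1) / w j) * c j *
    Complex.exp ((Δ : ℂ) * w j * ((L - 1 - (k : ℕ) : ℕ) : ℂ))).re

section Kernel

variable {m L : ℕ} {Δ : ℝ} {w : Fin m → ℂ}

theorem ssmOutput_eq_dotProduct (c : Fin m → ℂ) (x : Fin L → ℝ) :
    ssmOutput Δ w c x = ssmKernel Δ w c ⬝ᵥ x :=
  rfl

theorem abs_ssmKernel_le (hΔ : 0 ≤ Δ) (hw : ∀ j, (w j).re ≤ 0) (c : Fin m → ℂ) (k : Fin L) :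
    |ssmKernel Δ w c k| ≤ Δ * ∑ j, ‖c j‖ := by
  refine (Complex.abs_re_le_norm _).trans <| (norm_sum_le _ _).trans ?_
  rw [Finset.mul_sum]
  refine Finset.sum_le_sum fun j _ => ?_
  rw [mul_right_comm, norm_mul]
  exact mul_le_mul_of_nonneg_right (norm_exp_sub_one_div_mul_exp_le hΔ (hw j) _) (norm_nonneg _)

theorem dotProduct_self_ssmKernel_le (hΔ : 0 ≤ Δ) (hw : ∀ j, (w j).re ≤ 0) (c : Fin m → ℂ) :
    ssmKernel (L := L) Δ w c ⬝ᵥ ssmKernel Δ w c ≤ L * (Δ ^ 2 * (m * ∑ j, ‖c j‖ ^ 2)) := by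
  have hk (k : Fin L) : ssmKernel Δ w c k * ssmKernel Δ w c k ≤ Δ ^ 2 * (m * ∑ j, ‖c j‖ ^ 2) :=
    calc ssmKernel Δ w c k * ssmKernel Δ w c k = |ssmKernel Δ w c k| ^ 2 := by rw [sq_abs, sq]
      _ ≤ (Δ * ∑ j, ‖c j‖) ^ 2 := by gcongr; exact abs_ssmKernel_le hΔ hw c k
      _ ≤ Δ ^ 2 * (m * ∑ j, ‖c j‖ ^ 2) := by
        rw [mul_pow]
        gcongr
        simpa using sq_sum_le_card_mul_sum_sq (s := Finset.univ) (f := fun j => ‖c j‖)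
  simpa [dotProduct] using Finset.sum_le_sum fun k (_ : k ∈ Finset.univ) => hk k

theorem measurable_ssmKernel : Measurable (ssmKernel (L := L) Δ w) := by
  refine measurable_pi_lambda _ fun k => Complex.measurable_re.comp ?_
  fun_prop

theorem memLp_ssmKernel {Ω : Type*} [MeasurableSpace Ω] {μ : Measure Ω} {c : Ω → Fin m → ℂ}
    (hc : ∀ j, MemLp (fun ω => c ω j) 2 μ) (k : Fin L) :
    MemLp (fun ω => ssmKernel Δ w (c ω) k) 2 μ := by
  have h : MemLp (fun ω => ∑ j : Fin m, ((Complex.exp ((Δ : ℂ) * w j) - 1) / w j) * c ω j *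
      Complex.exp ((Δ : ℂ) * w j * ((L - 1 - (k : ℕ) : ℕ) : ℂ))) 2 μ :=
    memLp_finsetSum _ fun j _ => ((hc j).const_mul _).mul_const _
  exact h.re

end Kernel

open scoped MatrixOrder in
theorem Matrix.IsHermitian.dotProduct_mulVec_le_iSup_eigenvalues_mul {n : Type*} [Fintype n]
    [DecidableEq n] {A : Matrix n n ℝ} (hA : A.IsHermitian) (v : n → ℝ) :
    v ⬝ᵥ (A *ᵥ v) ≤ (⨆ i, hA.eigenvalues i) * (v ⬝ᵥ v) := by
  have hle : A ≤ algebraMap ℝ _ (⨆ i, hA.eigenvalues i) := by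
    refine le_algebraMap_of_spectrum_le fun r hr => ?_
    rw [hA.spectrum_real_eq_range_eigenvalues] at hr
    obtain ⟨i, rfl⟩ := hr
    exact le_ciSup (Set.finite_range _).bddAbove i
  simpa [Algebra.algebraMap_eq_smul_one, sub_mulVec, smul_mulVec, dotProduct_sub] using
    hle.dotProduct_mulVec_nonneg v

section SecondMoment

variable {Ω ι : Type*} [MeasurableSpace Ω] {μ : Measure Ω} [Fintype ι]

noncomputable def secondMomentMatrix (μ : Measure Ω) (X : Ω → ι → ℝ) : Matrix ι ι ℝ :=
  Matrix.of fun i k => ∫ ω, X ω i * X ω k ∂μ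

theorem sq_dotProduct (a b : ι → ℝ) :
    (a ⬝ᵥ b) ^ 2 = ∑ k, ∑ l, (a k * a l) * (b k * b l) := by
  simp only [dotProduct, sq, Finset.sum_mul_sum]
  exact Finset.sum_congr rfl fun k _ => Finset.sum_congr rfl fun l _ => by ring

theorem dotProduct_mulVec_eq_sum (A : Matrix ι ι ℝ) (v : ι → ℝ) :
    v ⬝ᵥ (A *ᵥ v) = ∑ k, ∑ l, (v k * v l) * A k l := by
  simp only [dotProduct, mulVec, Finset.mul_sum]
  exact Finset.sum_congr rfl fun k _ => Finset.sum_congr rfl fun l _ => by ring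

theorem integral_dotProduct_mulVec (A : Matrix ι ι ℝ) {X : Ω → ι → ℝ}
    (hX : ∀ i, MemLp (X · i) 2 μ) :
    ∫ ω, X ω ⬝ᵥ (A *ᵥ X ω) ∂μ = ∑ k, ∑ l, secondMomentMatrix μ X k l * A k l := by
  have hint (k l : ι) : Integrable (fun ω => (X ω k * X ω l) * A k l) μ :=
    ((hX k).integrable_mul (hX l)).mul_const _
  simp_rw [dotProduct_mulVec_eq_sum]
  refine (integral_finsetSum _ fun k _ => integrable_finsetSum _ fun l _ => hint k l).trans ?_
  refine Finset.sum_congr rfl fun k _ => ?_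
  refine (integral_finsetSum _ fun l _ => hint k l).trans ?_
  exact Finset.sum_congr rfl fun l _ => integral_mul_const _ _

theorem posSemidef_secondMomentMatrix {X : Ω → ι → ℝ} (hX : ∀ i, MemLp (X · i) 2 μ) :
    (secondMomentMatrix μ X).PosSemidef := by
  refine .of_dotProduct_mulVec_nonneg ?_ fun v => ?_
  · ext i k
    simp [secondMomentMatrix, mul_comm]
  · rw [star_trivial, dotProduct_mulVec_eq_sum]
    calc (0 : ℝ) ≤ ∫ ω, X ω ⬝ᵥ (vecMulVec v v *ᵥ X ω) ∂μ := integral_nonneg fun ω => by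
          simpa [vecMulVec_mulVec, dotProduct_comm v] using mul_self_nonneg (X ω ⬝ᵥ v)
      _ = ∑ k, ∑ l, (v k * v l) * secondMomentMatrix μ X k l := by
          rw [integral_dotProduct_mulVec _ hX]
          simp [vecMulVec_apply, mul_comm]

theorem integral_sq_dotProduct_of_indepFun {G X : Ω → ι → ℝ} (hG : ∀ i, MemLp (G · i) 2 μ)
    (hX : ∀ i, MemLp (X · i) 2 μ) (hGX : IndepFun G X μ) :
    ∫ ω, (G ω ⬝ᵥ X ω) ^ 2 ∂μ = ∫ ω, G ω ⬝ᵥ (secondMomentMatrix μ X *ᵥ G ω) ∂μ := by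
  have hindep (k l : ι) : IndepFun (fun ω => G ω k * G ω l) (fun ω => X ω k * X ω l) μ :=
    hGX.comp (φ := fun v : ι → ℝ => v k * v l) (ψ := fun v : ι → ℝ => v k * v l)
      (by fun_prop) (by fun_prop)
  have hint (k l : ι) : Integrable (fun ω => (G ω k * G ω l) * (X ω k * X ω l)) μ :=
    (hindep k l).integrable_mul ((hG k).integrable_mul (hG l)) ((hX k).integrable_mul (hX l))
  simp_rw [sq_dotProduct]
  rw [integral_dotProduct_mulVec _ hG]
  refine (integral_finsetSum _ fun k _ => integrable_finsetSum _ fun l _ => hint k l).trans ?_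
  refine Finset.sum_congr rfl fun k _ => ?_
  refine (integral_finsetSum _ fun l _ => hint k l).trans ?_
  exact Finset.sum_congr rfl fun l _ => (hindep k l).integral_fun_mul_eq_mul_integral
    ((hG k).integrable_mul (hG l)).1 ((hX k).integrable_mul (hX l)).1

theorem integral_sq_dotProduct_le_of_indepFun [DecidableEq ι] {G X : Ω → ι → ℝ}
    (hG : ∀ i, MemLp (G · i) 2 μ) (hX : ∀ i, MemLp (X · i) 2 μ) (hGX : IndepFun G X μ)
    (hM : (secondMomentMatrix μ X).IsHermitian) :
    ∫ ω, (G ω ⬝ᵥ X ω) ^ 2 ∂μ ≤ (⨆ i, hM.eigenvalues i) * ∫ ω, G ω ⬝ᵥ G ω ∂μ := by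
  have hGG : Integrable (fun ω => G ω ⬝ᵥ G ω) μ :=
    integrable_finsetSum _ fun k _ => (hG k).integrable_mul (hG k)
  rw [integral_sq_dotProduct_of_indepFun hG hX hGX, ← integral_const_mul]
  have hMpsd := posSemidef_secondMomentMatrix hX
  exact integral_mono_of_nonneg
    (.of_forall fun ω => by simpa using hMpsd.dotProduct_mulVec_nonneg _) (hGG.const_mul _) (.of_forall fun ω => hM.dotProduct_mulVec_le_iSup_eigenvalues_mul _)

end SecondMoment

section Gaussian

variable {Ω : Type*} [MeasurableSpace Ω] {μ : Measure Ω} {v : NNReal}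

theorem ProbabilityTheory.HasLaw.memLp_two_of_gaussianReal {X : Ω → ℝ}
    (hX : HasLaw X (gaussianReal 0 v) μ) : MemLp X 2 μ := by
  have h := memLp_id_gaussianReal (μ := 0) (v := v) 2
  rw [← hX.map_eq] at h
  exact (memLp_map_measure_iff aestronglyMeasurable_id hX.aemeasurable).1 h

theorem ProbabilityTheory.HasLaw.integral_sq_of_gaussianReal {X : Ω → ℝ}
    (hX : HasLaw X (gaussianReal 0 v) μ) : ∫ ω, X ω ^ 2 ∂μ = v := by
  rw [← variance_of_integral_eq_zero hX.aemeasurable (by simp [hX.integral_eq]), hX.variance_eq,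
    variance_id_gaussianReal]

theorem integral_norm_sq_of_hasLaw_gaussianReal {Z : Ω → ℂ} {v' : NNReal}
    (hre : HasLaw (fun ω => (Z ω).re) (gaussianReal 0 v) μ)
    (him : HasLaw (fun ω => (Z ω).im) (gaussianReal 0 v') μ) :
    ∫ ω, ‖Z ω‖ ^ 2 ∂μ = v + v' := by
  simp_rw [Complex.sq_norm, Complex.normSq_apply, ← sq]
  rw [integral_add hre.memLp_two_of_gaussianReal.integrable_sq
    him.memLp_two_of_gaussianReal.integrable_sq, hre.integral_sq_of_gaussianReal,
    him.integral_sq_of_gaussianReal]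

end Gaussian

theorem stmt_3_general
    {Ω : Type} [MeasurableSpace Ω] (μ : Measure Ω) [IsProbabilityMeasure μ]
    (Δ : ℝ) (hΔ : 0 < Δ) (m L : ℕ)
    (w : Fin m → ℂ) (hwre : ∀ j, (w j).re ≤ 0)
    (x : Ω → Fin L → ℝ)
    (hxL2 : ∀ i, MemLp (fun ω => x ω i) 2 μ)
    (c : Ω → Fin m → ℂ) (hcmeas : Measurable c)
    (hcgauss : ∀ i : Fin m ⊕ Fin m,
      Measure.map (fun ω => Sum.elim (fun j => (c ω j).re) (fun j => (c ω j).im) i) μ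
        = gaussianReal 0 (1 / 2 : NNReal))
    (hindep : IndepFun c x μ)
    (hHerm : (Matrix.of fun i k : Fin L => ∫ ω, x ω i * x ω k ∂μ).IsHermitian) :
    ∫ ω, (ssmOutput Δ w (c ω) (x ω)) ^ 2 ∂μ
      ≤ Δ ^ 2 * (m : ℝ) ^ 2 * (L : ℝ) * ⨆ i, hHerm.eigenvalues i := by
  have hre (j : Fin m) : HasLaw (fun ω => (c ω j).re) (gaussianReal 0 (1 / 2)) μ :=
    ⟨by fun_prop, hcgauss (.inl j)⟩
  have him (j : Fin m) : HasLaw (fun ω => (c ω j).im) (gaussianReal 0 (1 / 2)) μ :=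
    ⟨by fun_prop, hcgauss (.inr j)⟩
  have hcL2 (j : Fin m) : MemLp (fun ω => c ω j) 2 μ :=
    memLp_re_im_iff.1 ⟨(hre j).memLp_two_of_gaussianReal, (him j).memLp_two_of_gaussianReal⟩
  have hlam : 0 ≤ ⨆ i, hHerm.eigenvalues i :=
    Real.iSup_nonneg (posSemidef_secondMomentMatrix hxL2).eigenvalues_nonneg
  have hnormsq : Integrable (fun ω => ∑ j, ‖c ω j‖ ^ 2) μ :=
    integrable_finsetSum _ fun j _ => (hcL2 j).norm.integrable_sq
  calc ∫ ω, (ssmOutput Δ w (c ω) (x ω)) ^ 2 ∂μ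
      ≤ (⨆ i, hHerm.eigenvalues i) * ∫ ω, ssmKernel Δ w (c ω) ⬝ᵥ ssmKernel Δ w (c ω) ∂μ :=
        integral_sq_dotProduct_le_of_indepFun (memLp_ssmKernel hcL2) hxL2
          (hindep.comp measurable_ssmKernel measurable_id) hHerm
    _ ≤ (⨆ i, hHerm.eigenvalues i) * ∫ ω, L * (Δ ^ 2 * (m * ∑ j, ‖c ω j‖ ^ 2)) ∂μ := by
        refine mul_le_mul_of_nonneg_left (integral_mono_of_nonneg ?_ ?_ ?_) hlam
        · exact .of_forall fun ω => dotProduct_star_self_nonneg (ssmKernel Δ w (c ω))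
        · exact ((hnormsq.const_mul _).const_mul _).const_mul _
        · exact .of_forall fun ω => dotProduct_self_ssmKernel_le hΔ.le hwre _
    _ = Δ ^ 2 * m ^ 2 * L * ⨆ i, hHerm.eigenvalues i := by
        simp only [integral_const_mul, integral_finsetSum _ fun j _ => (hcL2 j).norm.integrable_sq,
          integral_norm_sq_of_hasLaw_gaussianReal (hre _) (him _)]
        norm_num
        ring

/-- For the ZOH-discretized SSM with timescale `Δ > 0`, state vector `w`
with nonzero entries and nonpositive real parts, a square-integrable random input
`x ∈ ℝ^L`, and an independent random read-out `c ∈ ℂ^m` whose `2m` real and imaginary parts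
are mutually independent centered Gaussians of variance `1/2`, the output satisfies
`E[y_L²] ≤ Δ² m² L λ_max(E[x xᵀ])`. -/
theorem stmt_3
    {Ω : Type} [MeasurableSpace Ω] (μ : Measure Ω) [IsProbabilityMeasure μ]
    (Δ : ℝ) (hΔ : 0 < Δ) (m L : ℕ) (hm : 0 < m) (hL : 0 < L)
    (w : Fin m → ℂ) (hw0 : ∀ j, w j ≠ 0) (hwre : ∀ j, (w j).re ≤ 0)
    (x : Ω → Fin L → ℝ) (hxmeas : Measurable x)
    (hxL2 : ∀ i, MemLp (fun ω => x ω i) 2 μ)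
    (c : Ω → Fin m → ℂ) (hcmeas : Measurable c)
    (hcindep : iIndepFun
      (fun (i : Fin m ⊕ Fin m) (ω : Ω) =>
        Sum.elim (fun j => (c ω j).re) (fun j => (c ω j).im) i) μ)
    (hcgauss : ∀ i : Fin m ⊕ Fin m,
      Measure.map (fun ω => Sum.elim (fun j => (c ω j).re) (fun j => (c ω j).im) i) μ
        = gaussianReal 0 (1 / 2 : NNReal))
    (hindep : IndepFun c x μ)
    (hHerm : (Matrix.of fun i k : Fin L => ∫ ω, x ω i * x ω k ∂μ).IsHermitian) :
    ∫ ω, (ssmOutput Δ w (c ω) (x ω)) ^ 2 ∂μ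
      ≤ Δ ^ 2 * (m : ℝ) ^ 2 * (L : ℝ) * ⨆ i, hHerm.eigenvalues i :=
  stmt_3_general μ Δ hΔ m L w hwre x hxL2 c hcmeas hcgauss hindep hHerm
end

section
/- Let m be a positive integer and let w_j = a_j + i·v_j for j = 1, …, m with a_j < 0 and with v_1, …, v_m pairwise distinct positive real numbers. Then the matrix G ∈ ℝ^{m×m} with entries G_{j,k} = ∫₀^∞ Re(e^{w_j s}) Re(e^{w_k s}) ds is symmetric positive definite. -/
/-!
`G` is the Gram matrix of the functions `s ↦ Re e^{w_j s}` in `L²(0, ∞)`, so it is positive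
definite once these functions are linearly independent on `(0, ∞)`. Writing
`Re e^{w s} = (e^{w s} + e^{w̄ s}) / 2`, this reduces to the linear independence of the `2m`
exponentials `e^{w_j s}`, `e^{w̄_j s}`, whose exponents are distinct because the `Im w_j = v_j` are
distinct and positive. Distinct exponentials are linearly independent by Dedekind's theorem on
characters, applied to the monoid `(ℝ≥0, +)`.
-/

open MeasureTheory Complex Set Function
open scoped NNReal ComplexConjugate

noncomputable def cexpMulChar (μ : ℂ) : Multiplicative ℝ≥0 →* ℂ where
  toFun s := cexp (μ * (s.toAdd : ℝ))
  map_one' := by simp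
  map_mul' s t := by simp [mul_add, exp_add]

theorem hasDerivAt_cexp_mul (μ : ℂ) (s : ℝ) :
    HasDerivAt (fun s : ℝ => cexp (μ * s)) (μ * cexp (μ * s)) s := by
  simpa [mul_comm] using ((hasDerivAt_id s).ofReal_comp.const_mul μ).cexp

theorem cexpMulChar_injective : Injective cexpMulChar := by
  intro μ ν h
  have hμν : EqOn (fun s : ℝ => cexp (μ * s)) (fun s : ℝ => cexp (ν * s)) (Ici 0) :=
    fun s hs => DFunLike.congr_fun h (Multiplicative.ofAdd ⟨s, hs⟩)
  have hμ := (hasDerivAt_cexp_mul μ 0).hasDerivWithinAt (s := Ici 0)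
  have hν := ((hasDerivAt_cexp_mul ν 0).hasDerivWithinAt (s := Ici 0)).congr hμν
    (hμν self_mem_Ici)
  simpa using (uniqueDiffWithinAt_Ici 0).eq_deriv _ hμ hν

theorem linearIndependent_cexp_mul_Ioi {ι : Type*} {μ : ι → ℂ} (hμ : Injective μ) :
    LinearIndependent ℂ fun i (s : Ioi (0 : ℝ)) => cexp (μ i * s) := by
  have hchar : LinearIndependent ℂ fun i => ⇑(cexpMulChar (μ i)) :=
    (linearIndependent_monoidHom _ ℂ).comp _ (cexpMulChar_injective.comp hμ)
  -- on `(1, ∞)` the exponentials are the characters scaled by the units `e^{μ i}`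
  let shift : Multiplicative ℝ≥0 → Ioi (0 : ℝ) := fun s => ⟨s.toAdd + 1, mem_Ioi.2 (by positivity)⟩
  refine .of_comp (LinearMap.funLeft ℂ ℂ shift) ?_
  convert hchar.units_smul fun i => Units.mk0 (cexp (μ i)) (exp_ne_zero _) using 1
  ext i s
  simp [shift, cexpMulChar, mul_add, exp_add, mul_comm]

theorem linearIndependent_re_cexp_mul_Ioi {ι : Type*} [Fintype ι] {w : ι → ℂ} (hw : Injective w)
    (him : ∀ i, 0 < (w i).im) :
    LinearIndependent ℝ fun i (s : Ioi (0 : ℝ)) => (cexp (w i * s)).re := by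
  have hconj : Injective fun i => conj (w i) := (RingHom.injective _).comp hw
  have hdisj : ∀ i j, w i ≠ conj (w j) := fun i j h => by
    have := congrArg im h
    simp only [conj_im] at this
    linarith [him i, him j]
  have hcomplex := Fintype.linearIndependent_iff.1
    (linearIndependent_cexp_mul_Ioi (hw.sumElim hconj hdisj))
  refine Fintype.linearIndependent_iff.2 fun c hc i => ?_
  have := hcomplex (Sum.elim (fun i => (c i / 2 : ℂ)) fun i => (c i / 2 : ℂ)) ?_ (.inl i)
  · simpa using this
  ext s
  have hs := congrArg (fun f => (f s : ℂ)) hc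
  simp only [Finset.sum_apply, Pi.smul_apply, smul_eq_mul, Pi.zero_apply, ofReal_zero] at hs ⊢
  rw [Fintype.sum_sum_type, ← hs, ← Finset.sum_add_distrib]
  push_cast
  refine Finset.sum_congr rfl fun j _ => ?_
  simp only [Sum.elim_inl, Sum.elim_inr, re_eq_add_conj, ← exp_conj, map_mul, conj_ofReal]
  ring

theorem memLp_two_cexp_mul_Ioi {w : ℂ} (hw : w.re < 0) :
    MemLp (fun s : ℝ => cexp (w * s)) 2 (volume.restrict (Ioi 0)) := by
  refine (memLp_two_iff_integrable_sq_norm (by fun_prop)).2 ?_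
  refine (integrableOn_exp_mul_complex_Ioi (a := 2 * w) (by simp; linarith) 0).norm.congr ?_
  filter_upwards with s
  rw [sq, ← norm_mul, ← exp_add]
  ring_nf

theorem Matrix.posDef_setIntegral_mul_of_linearIndependent {X ι : Type*} [TopologicalSpace X]
    [MeasurableSpace X] {μ : Measure X} [μ.IsOpenPosMeasure] [Fintype ι]
    {U : Set X} (hU : IsOpen U) {f : ι → X → ℝ} (hf : ∀ i, MemLp (f i) 2 (μ.restrict U))
    (hcont : ∀ i, ContinuousOn (f i) U) (hli : LinearIndependent ℝ fun i (x : U) => f i x) :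
    (Matrix.of fun i j => ∫ x in U, f i x * f j x ∂μ).PosDef := by
  let F i : Lp ℝ 2 (μ.restrict U) := (hf i).toLp (f i)
  have hgram : (Matrix.of fun i j => ∫ x in U, f i x * f j x ∂μ) = Matrix.gram ℝ F := by
    ext i j
    refine integral_congr_ae ?_
    filter_upwards [(hf i).coeFn_toLp, (hf j).coeFn_toLp] with x hi hj
    simp [F, hi, hj, mul_comm]
  rw [hgram]
  refine Matrix.posDef_gram_of_linearIndependent (Fintype.linearIndependent_iff.2 fun c hc => ?_)
  have hae : (fun x => ∑ i, c i * f i x) =ᵐ[μ.restrict U] 0 := by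
    have hsum := Lp.coeFn_fun_finsetSum Finset.univ fun i => c i • F i
    rw [hc] at hsum
    filter_upwards [hsum, Lp.coeFn_zero ℝ 2 (μ.restrict U),
      ae_all_iff.2 fun i => Lp.coeFn_smul (c i) (F i),
      ae_all_iff.2 fun i => (hf i).coeFn_toLp] with x hx h0 hsmul hF
    simp_all [F]
  have hzero := Measure.eqOn_open_of_ae_eq hae hU
    (continuousOn_finsetSum _ fun i _ => continuousOn_const.mul (hcont i)) continuousOn_const
  refine Fintype.linearIndependent_iff.1 hli c (funext fun x => ?_)
  simpa using hzero x.2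

theorem stmt_7_general (m : ℕ) (a v : Fin m → ℝ) (ha : ∀ j, a j < 0)
    (hv : ∀ j, 0 < v j) (hinj : Function.Injective v) :
    (Matrix.of fun j k : Fin m =>
      ∫ s in Set.Ioi (0 : ℝ),
        (Complex.exp (((a j : ℂ) + (v j : ℂ) * Complex.I) * (s : ℂ))).re *
        (Complex.exp (((a k : ℂ) + (v k : ℂ) * Complex.I) * (s : ℂ))).re).PosDef := by
  let w j : ℂ := a j + v j * I
  have hw : Injective w := fun j k h => hinj (by simpa [w] using congrArg im h)
  exact Matrix.posDef_setIntegral_mul_of_linearIndependent isOpen_Ioi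
    (fun j => (memLp_two_cexp_mul_Ioi (w := w j) (by simpa [w] using ha j)).re)
    (fun j => by fun_prop) (linearIndependent_re_cexp_mul_Ioi hw fun j => by simpa [w] using hv j)

/-- For `w_j = a_j + i v_j` with `a_j < 0` and `v_1, …, v_m` pairwise distinct
positive reals, the Gram matrix `G_{j,k} = ∫₀^∞ Re(e^{w_j s}) Re(e^{w_k s}) ds` is
(symmetric) positive definite. -/
theorem stmt_7 (m : ℕ) (hm : 0 < m) (a v : Fin m → ℝ) (ha : ∀ j, a j < 0)
    (hv : ∀ j, 0 < v j) (hinj : Function.Injective v) :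
    (Matrix.of fun j k : Fin m =>
      ∫ s in Set.Ioi (0 : ℝ),
        (Complex.exp (((a j : ℂ) + (v j : ℂ) * Complex.I) * (s : ℂ))).re *
        (Complex.exp (((a k : ℂ) + (v k : ℂ) * Complex.I) * (s : ℂ))).re).PosDef :=
  stmt_7_general m a v ha hv hinj
end

section
/- Let m ≥ 2 and take the S4D-Lin initialization v_j = π·j for j = 1, …, m, with w_j = −1/2 + i·v_j, and let G ∈ ℝ^{m×m} be the Gram matrix G_{j,k} = ∫₀^∞ Re(e^{w_j s}) Re(e^{w_k s}) ds. Then 0.2 < λ_min(G) ≤ λ_max(G) < √2; in particular the condition number λ_max(G)/λ_min(G) is bounded above uniformly in m. -/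
open MeasureTheory Real

/-!
Each entry of `G` is an explicit Laplace-type integral: writing `Re e^{ws} = (e^{ws} + e^{w̄s})/2`
gives `G_{jk} = (L(v_j - v_k) + L(v_j + v_k))/2` with the Lorentzian `L(t) = 1/(1 + t²)`. For the
S4D-Lin frequencies the diagonal lies in `[1/2, 1]`, while `L(πn) < 1/(π²n²)` and `∑ 1/n² = π²/6`
bound every off-diagonal row sum by `(2 · 1/6 + 1/6)/2 = 1/4`. Gershgorin's theorem then puts the
spectrum in `[1/4, 5/4] ⊂ (0.2, √2)`.
-/

open Set Finset ComplexConjugate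

theorem Complex.re_mul_re_eq (z w : ℂ) : z.re * w.re = ((z * w).re + (z * conj w).re) / 2 := by
  simp only [Complex.mul_re, Complex.conj_re, Complex.conj_im]; ring

theorem integral_re_exp_mul_Ioi {c : ℂ} (hc : c.re < 0) :
    ∫ s in Ioi (0 : ℝ), (Complex.exp (c * s)).re = (-1 / c).re := by
  have h := integral_re (integrableOn_exp_mul_complex_Ioi hc 0)
  rw [integral_exp_mul_complex_Ioi hc] at h
  simpa using h

theorem integral_re_exp_mul_re_exp {a b : ℂ} (ha : a.re < 0) (hb : b.re < 0) :
    ∫ s in Ioi (0 : ℝ), (Complex.exp (a * s)).re * (Complex.exp (b * s)).re =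
      ((-1 / (a + b)).re + (-1 / (a + conj b)).re) / 2 := by
  have hsum : (a + b).re < 0 := by simp only [Complex.add_re]; linarith
  have hconj : (a + conj b).re < 0 := by simp only [Complex.add_re, Complex.conj_re]; linarith
  have hpt : ∀ s : ℝ, (Complex.exp (a * s)).re * (Complex.exp (b * s)).re =
      ((Complex.exp ((a + b) * s)).re + (Complex.exp ((a + conj b) * s)).re) / 2 := by
    intro s
    rw [Complex.re_mul_re_eq, ← Complex.exp_conj, ← Complex.exp_add, ← Complex.exp_add, map_mul,
      Complex.conj_ofReal, add_mul, add_mul]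
  simp_rw [hpt]
  rw [integral_div, integral_add, integral_re_exp_mul_Ioi hsum, integral_re_exp_mul_Ioi hconj]
  · exact (integrableOn_exp_mul_complex_Ioi hsum 0).re
  · exact (integrableOn_exp_mul_complex_Ioi hconj 0).re

theorem Complex.re_neg_one_div_neg_one_add_mul_I (t : ℝ) :
    (-1 / ((-1 : ℂ) + t * Complex.I)).re = 1 / (1 + t ^ 2) := by
  rw [Complex.div_re]
  simp [Complex.normSq_apply]
  field_simp

theorem integral_re_exp_mul_re_exp_of_re_eq_neg_half (x y : ℝ) :
    ∫ s in Ioi (0 : ℝ),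
      (Complex.exp (((-(1/2) : ℝ) + (x : ℂ) * Complex.I) * (s : ℂ))).re *
      (Complex.exp (((-(1/2) : ℝ) + (y : ℂ) * Complex.I) * (s : ℂ))).re =
      (1 / (1 + (x - y) ^ 2) + 1 / (1 + (x + y) ^ 2)) / 2 := by
  have hsum : (((-(1/2) : ℝ) : ℂ) + x * Complex.I) + (((-(1/2) : ℝ) : ℂ) + y * Complex.I) =
      -1 + ((x + y : ℝ) : ℂ) * Complex.I := by push_cast; ring
  have hdiff : (((-(1/2) : ℝ) : ℂ) + x * Complex.I) + conj (((-(1/2) : ℝ) : ℂ) + y * Complex.I) =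
      -1 + ((x - y : ℝ) : ℂ) * Complex.I := by
    simp only [map_add, map_mul, Complex.conj_ofReal, Complex.conj_I]; push_cast; ring
  rw [integral_re_exp_mul_re_exp (by simp) (by simp), hsum, hdiff,
    Complex.re_neg_one_div_neg_one_add_mul_I, Complex.re_neg_one_div_neg_one_add_mul_I,
    add_comm (1 / (1 + (x + y) ^ 2))]
theorem hasSum_one_div_pi_mul_nat_sq : HasSum (fun n : ℕ => 1 / (π * n) ^ 2) (1 / 6) := by
  have hf : (fun n : ℕ => 1 / (π * n) ^ 2) = fun n : ℕ => 1 / π ^ 2 * (1 / (n : ℝ) ^ 2) := by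
    ext n; rw [mul_pow, one_div_mul_one_div]
  rw [hf, show (1 : ℝ) / 6 = 1 / π ^ 2 * (π ^ 2 / 6) by field_simp]
  exact hasSum_zeta_two.mul_left _

theorem hasSum_one_div_pi_mul_int_sq : HasSum (fun n : ℤ => 1 / (π * n) ^ 2) (1 / 3) := by
  have h := hasSum_one_div_pi_mul_nat_sq
  have h' := HasSum.of_nat_of_neg (f := fun n : ℤ => 1 / (π * n) ^ 2) (by simpa using h)
    (by simpa using h)
  rwa [show (6⁻¹ : ℝ) + 6⁻¹ - 1 / (π * ((0 : ℤ) : ℝ)) ^ 2 = 1 / 3 by norm_num] at h'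

theorem one_div_one_add_sq_le {x : ℝ} (hx : x ≠ 0) : 1 / (1 + x ^ 2) ≤ 1 / x ^ 2 :=
  one_div_le_one_div_of_le (by positivity) (by linarith)

theorem Finset.sum_comp_le_tsum_of_injective {ι κ : Type*} {f : κ → ℝ} (hf : Summable f)
    (hf0 : ∀ x, 0 ≤ f x) {i : ι → κ} (hi : Function.Injective i) (s : Finset ι) :
    ∑ k ∈ s, f (i k) ≤ ∑' x, f x :=
  (sum_map s ⟨i, hi⟩ f).symm.trans_le (hf.sum_le_tsum _ fun x _ => hf0 x)

theorem Matrix.IsHermitian.eigenvalues_mem_Icc {n : Type*} [Fintype n] [DecidableEq n]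
    {A : Matrix n n ℝ} (hA : A.IsHermitian) {a b r : ℝ} (hdiag : ∀ k, A k k ∈ Icc a b)
    (hrow : ∀ k, ∑ j ∈ univ.erase k, |A k j| ≤ r) (i : n) :
    hA.eigenvalues i ∈ Icc (a - r) (b + r) := by
  have hμ : Module.End.HasEigenvalue (Matrix.toLin' A) (hA.eigenvalues i) :=
    .of_mem_spectrum (by rw [Matrix.spectrum_toLin']; exact hA.eigenvalues_mem_spectrum_real i)
  obtain ⟨k, hk⟩ := eigenvalue_mem_ball hμ
  rw [Metric.mem_closedBall, Real.dist_eq] at hk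
  have hk' := abs_le.mp (hk.trans (hrow k))
  exact ⟨by linarith [(hdiag k).1], by linarith [(hdiag k).2]⟩

theorem sum_erase_s4dLin_gram_le (m : ℕ) (j : Fin m) :
    ∑ k ∈ univ.erase j, (1 / (1 + (π * ((j : ℕ) - (k : ℕ) : ℝ)) ^ 2) +
      1 / (1 + (π * ((j : ℕ) + (k : ℕ) + 2 : ℝ)) ^ 2)) ≤ 1 / 2 := by
  have hdiff : ∑ k ∈ univ.erase j, 1 / (1 + (π * ((j : ℕ) - (k : ℕ) : ℝ)) ^ 2) ≤ 1 / 3 := by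
    calc _ ≤ ∑ k ∈ univ.erase j, 1 / (π * (((j : ℤ) - k : ℤ) : ℝ)) ^ 2 := by
          refine sum_le_sum fun k hk => ?_
          push_cast
          refine one_div_one_add_sq_le (mul_ne_zero pi_ne_zero (sub_ne_zero.mpr ?_))
          exact_mod_cast Fin.val_ne_of_ne (ne_of_mem_erase hk).symm
      _ ≤ 1 / 3 := hasSum_one_div_pi_mul_int_sq.tsum_eq ▸
          sum_comp_le_tsum_of_injective hasSum_one_div_pi_mul_int_sq.summable
            (fun _ => by positivity) (fun k l hkl => Fin.ext (by simpa using hkl)) _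
  have hsum : ∑ k ∈ univ.erase j, 1 / (1 + (π * ((j : ℕ) + (k : ℕ) + 2 : ℝ)) ^ 2) ≤ 1 / 6 := by
    calc _ ≤ ∑ k ∈ univ.erase j, 1 / (π * (((j : ℕ) + k + 2 : ℕ) : ℝ)) ^ 2 := by
          refine sum_le_sum fun k _ => ?_
          push_cast
          exact one_div_one_add_sq_le (by positivity)
      _ ≤ 1 / 6 := hasSum_one_div_pi_mul_nat_sq.tsum_eq ▸
          sum_comp_le_tsum_of_injective hasSum_one_div_pi_mul_nat_sq.summable
            (fun _ => by positivity) (fun k l hkl => Fin.ext (by simpa using hkl)) _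
  rw [sum_add_distrib]
  linarith

/-- For `m ≥ 2` with the S4D-Lin initialization `v_j = π j`,
`w_j = -1/2 + i v_j`, the Gram matrix `G_{j,k} = ∫₀^∞ Re(e^{w_j s}) Re(e^{w_k s}) ds` satisfies
`0.2 < λ_min(G) ≤ λ_max(G) < √2`; in particular, the condition number `λ_max(G)/λ_min(G)` is
bounded above uniformly in `m` (by `√2 / 0.2`). -/
theorem stmt_10 (m : ℕ) (hm : 2 ≤ m)
    (v : Fin m → ℝ) (hv : ∀ j, v j = π * ((j : ℕ) + 1))
    (G : Matrix (Fin m) (Fin m) ℝ)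
    (hG : ∀ j k, G j k = ∫ s in Set.Ioi (0 : ℝ),
      (Complex.exp (((-(1/2) : ℝ) + (v j : ℂ) * Complex.I) * (s : ℂ))).re *
      (Complex.exp (((-(1/2) : ℝ) + (v k : ℂ) * Complex.I) * (s : ℂ))).re)
    (hHerm : G.IsHermitian) :
    (0.2 < ⨅ i, hHerm.eigenvalues i) ∧
    (⨅ i, hHerm.eigenvalues i) ≤ (⨆ i, hHerm.eigenvalues i) ∧
    ((⨆ i, hHerm.eigenvalues i) < Real.sqrt 2) ∧
    ((⨆ i, hHerm.eigenvalues i) / (⨅ i, hHerm.eigenvalues i) < Real.sqrt 2 / 0.2) := by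
  have hentry : ∀ j k, G j k = (1 / (1 + (π * ((j : ℕ) - (k : ℕ) : ℝ)) ^ 2) +
      1 / (1 + (π * ((j : ℕ) + (k : ℕ) + 2 : ℝ)) ^ 2)) / 2 := by
    intro j k
    rw [hG, integral_re_exp_mul_re_exp_of_re_eq_neg_half, hv, hv]
    ring_nf
  have hdiag : ∀ j, G j j ∈ Set.Icc (1 / 2 : ℝ) 1 := by
    intro j
    have ht : 1 / (1 + (π * ((j : ℕ) + (j : ℕ) + 2 : ℝ)) ^ 2) ∈ Set.Icc (0 : ℝ) 1 :=
      ⟨by positivity, div_le_one_of_le₀ (by nlinarith) (by positivity)⟩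
    rw [hentry, sub_self, mul_zero, zero_pow two_ne_zero, add_zero, div_one]
    constructor <;> linarith [ht.1, ht.2]
  have hrow : ∀ j, ∑ k ∈ univ.erase j, |G j k| ≤ 1 / 4 := by
    intro j
    have hpos : ∀ k, 0 < G j k := fun k => by rw [hentry]; positivity
    rw [sum_congr rfl fun k _ => (abs_of_pos (hpos k)).trans (hentry j k), ← sum_div]
    linarith [sum_erase_s4dLin_gram_le m j]
  have hev := hHerm.eigenvalues_mem_Icc hdiag hrow
  have : Nonempty (Fin m) := ⟨⟨0, by omega⟩⟩
  have hfin := Set.finite_range hHerm.eigenvalues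
  have hinf : 1 / 4 ≤ ⨅ i, hHerm.eigenvalues i := le_ciInf fun i => by linarith [(hev i).1]
  have hsup : ⨆ i, hHerm.eigenvalues i ≤ 5 / 4 := ciSup_le fun i => by linarith [(hev i).2]
  have hinf_le_sup := ciInf_le_ciSup hfin.bddBelow hfin.bddAbove
  have hsqrt : (5 / 4 : ℝ) < √2 := (lt_sqrt (by norm_num)).mpr (by norm_num)
  refine ⟨by linarith, hinf_le_sup, by linarith, ?_⟩
  calc (⨆ i, hHerm.eigenvalues i) / (⨅ i, hHerm.eigenvalues i)
      ≤ (⨆ i, hHerm.eigenvalues i) / 0.2 := by gcongr <;> linarith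
    _ < √2 / 0.2 := by gcongr; linarith
end

section
/- For every real number x, 1/(1 + x²) − 2/(1 + 4x²) < 0.12. -/
/-- `1/(1+x²) - 2/(1+4x²) < 0.12` for all real `x`. -/
theorem stmt_13 (x : ℝ) : 1 / (1 + x ^ 2) - 2 / (1 + 4 * x ^ 2) < 0.12 := by
  have h1 : (0:ℝ) < 1 + x ^ 2 := by positivity
  have h2 : (0:ℝ) < 1 + 4 * x ^ 2 := by positivity
  rw [div_sub_div _ _ h1.ne' h2.ne', div_lt_iff₀ (by positivity)]
  nlinarith [sq_nonneg (x^2 - 35/24), sq_nonneg x]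
end
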